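/- Let p : 𝕊 → ℂ be holomorphic on 𝕊 = {w : 0 < Re w < 1} with Re p(w) ≥ 0 on 𝕊. Then the limits A := lim_{v→+∞} e^{−πv} p(1/2 + iv) and B := lim_{v→−∞} e^{πv} p(1/2 + iv) exist, are finite, and are nonnegative real numbers. -/

import Mathlib

open Complex Set Filter
open ComplexConjugate Metric Topology
open scoped Real

/-!
Put `F v = p (1/2 + v i)`. Schwarz's lemma, transported to the strip by the map
`ζ ↦ 1/2 + v i - (i/π) log ((1 + ζ)/(1 - ζ))` from the unit disc, gives `‖F'‖ ≤ π Re F`.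
Hence `φ v = e^{-πv} Re F v` is nonincreasing and nonnegative, so it converges. The same bound
gives `(Im F')² ≤ 2π Re F · (π Re F - Re F')` with `π Re F - Re F' = -e^{πv} φ'`, so by AM-GM
`|Im F'|` is at most `t e^{πs} / 2` plus a multiple of `-e^{πv} φ'` on `[V, v]`. Integrating,
`e^{-πv} |Im F v - Im F V| ≤ t / 2π + π Re F 0 · (φ V - φ v) / t`, which is small for small `t`
and large `V`. The limit at `-∞` is the one at `+∞` for `w ↦ p (1 - w)`.
-/

local notation "𝕊" => re ⁻¹' Ioo (0 : ℝ) 1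

theorem Complex.norm_sub_div_add_conj_lt_one {a b : ℂ} (ha : 0 < a.re) (hb : 0 < b.re) :
    ‖(a - b) / (a + conj b)‖ < 1 := by
  have hre : 0 < (a + conj b).re := by simp only [add_re, conj_re]; linarith
  have hden : 0 < ‖a + conj b‖ := norm_pos_iff.2 fun h => by simp [h] at hre
  rw [norm_div, div_lt_one hden, ← sq_lt_sq₀ (norm_nonneg _) hden.le, Complex.sq_norm,
    Complex.sq_norm, normSq_apply, normSq_apply]
  simp only [sub_re, sub_im, add_re, add_im, conj_re, conj_im]
  nlinarith [mul_pos ha hb]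

theorem hasDerivAt_sub_div_add_conj {b : ℂ} (hb : 0 < b.re) :
    HasDerivAt (fun a => (a - b) / (a + conj b)) (1 / (2 * b.re)) b := by
  have hsum : b + conj b = 2 * b.re := by rw [add_conj]; push_cast; ring
  have hre : (b.re : ℂ) ≠ 0 := by exact_mod_cast hb.ne'
  have hne : (2 * b.re : ℂ) ≠ 0 := mul_ne_zero two_ne_zero hre
  refine (((hasDerivAt_id' b).sub_const b).div ((hasDerivAt_id' b).add_const (conj b))
    (by simpa [hsum] using hne)).congr_deriv ?_
  rw [sub_self, hsum]
  field_simp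
  ring

theorem norm_deriv_le_two_mul_re_div_of_re_pos {f : ℂ → ℂ} {c : ℂ} {R : ℝ} (hR : 0 < R)
    (hf : DifferentiableOn ℂ f (ball c R)) (hre : ∀ z ∈ ball c R, 0 < (f z).re) :
    ‖deriv f c‖ ≤ 2 * (f c).re / R := by
  set b := f c
  have hb : 0 < b.re := hre c (mem_ball_self hR)
  set Φ : ℂ → ℂ := fun a => (a - b) / (a + conj b)
  have hΦf : DifferentiableOn ℂ (Φ ∘ f) (ball c R) :=
    (hf.sub_const b).div (hf.add_const _) fun z hz h => by
      have := congrArg re h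
      simp only [add_re, conj_re, zero_re] at this
      linarith [hre z hz]
  have hmaps : MapsTo (Φ ∘ f) (ball c R) (closedBall ((Φ ∘ f) c) 1) := fun z hz => by
    simpa [Φ, b] using (Complex.norm_sub_div_add_conj_lt_one (hre z hz) hb).le
  have hderiv : HasDerivAt (Φ ∘ f) (1 / (2 * b.re) * deriv f c) c :=
    (hasDerivAt_sub_div_add_conj hb).comp c
      (hf.differentiableAt (isOpen_ball.mem_nhds (mem_ball_self hR))).hasDerivAt
  have := Complex.norm_deriv_le_div_of_mapsTo_ball hΦf hmaps hR
  rw [hderiv.deriv, norm_mul, one_div, norm_inv, norm_mul, Complex.norm_real,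
    Real.norm_of_nonneg hb.le, Complex.norm_two, ← div_eq_inv_mul,
    div_le_div_iff₀ (by positivity) hR] at this
  rw [le_div_iff₀ hR]
  linarith

theorem Complex.re_one_add_div_one_sub_pos {ζ : ℂ} (hζ : ‖ζ‖ < 1) :
    0 < ((1 + ζ) / (1 - ζ)).re := by
  have hsq : ζ.re ^ 2 + ζ.im ^ 2 < 1 := by
    have := Complex.sq_norm ζ
    rw [normSq_apply] at this
    nlinarith [norm_nonneg ζ]
  have hne : 1 - ζ ≠ 0 := fun h => by
    rw [sub_eq_zero] at h; simp [← h] at hζ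
  rw [div_re, ← add_div]
  apply div_pos _ (normSq_pos.2 hne)
  simp only [add_re, one_re, sub_re, add_im, one_im, sub_im]
  nlinarith

noncomputable def diskToStrip (v : ℝ) (ζ : ℂ) : ℂ :=
  1 / 2 + v * I - I / π * log ((1 + ζ) / (1 - ζ))

theorem diskToStrip_zero (v : ℝ) : diskToStrip v 0 = 1 / 2 + v * I := by
  simp [diskToStrip]

theorem re_diskToStrip (v : ℝ) (ζ : ℂ) :
    (diskToStrip v ζ).re = 1 / 2 + arg ((1 + ζ) / (1 - ζ)) / π := by
  simp [diskToStrip, log_im, div_eq_inv_mul]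

theorem mapsTo_diskToStrip (v : ℝ) :
    MapsTo (diskToStrip v) (ball 0 1) 𝕊 := by
  intro ζ hζ
  have harg := abs_lt.1 (abs_arg_lt_pi_div_two_iff.2
    (Or.inl (re_one_add_div_one_sub_pos (mem_ball_zero_iff.1 hζ))))
  rw [mem_preimage, re_diskToStrip, mem_Ioo]
  constructor
  · have : -(1 / 2 : ℝ) < arg ((1 + ζ) / (1 - ζ)) / π := by
      rw [lt_div_iff₀ Real.pi_pos]; linarith
    linarith
  · have : arg ((1 + ζ) / (1 - ζ)) / π < 1 / 2 := by
      rw [div_lt_iff₀ Real.pi_pos]; linarith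
    linarith

theorem hasDerivAt_diskToStrip {v : ℝ} {ζ : ℂ} (hζ : ‖ζ‖ < 1) :
    HasDerivAt (diskToStrip v) (-(2 * I / π) / ((1 - ζ) * (1 + ζ))) ζ := by
  have hne : 1 - ζ ≠ 0 := fun h => by
    rw [sub_eq_zero] at h; simp [← h] at hζ
  have hne' : 1 + ζ ≠ 0 := fun h => by
    rw [add_eq_zero_iff_eq_neg'] at h; simp [h] at hζ
  have hq : HasDerivAt (fun ζ => (1 + ζ) / (1 - ζ)) (2 / (1 - ζ) ^ 2) ζ := by
    refine (((hasDerivAt_id' ζ).const_add 1).div ((hasDerivAt_id' ζ).const_sub 1)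
      hne).congr_deriv ?_
    ring
  have hlog := hq.clog (mem_slitPlane_iff.2 (Or.inl (re_one_add_div_one_sub_pos hζ)))
  refine ((hlog.const_mul (I / π)).const_sub _).congr_deriv ?_
  field_simp

theorem HasDerivAt.re {F : ℝ → ℂ} {F' : ℂ} {v : ℝ} (hF : HasDerivAt F F' v) :
    HasDerivAt (fun s => (F s).re) F'.re v :=
  reCLM.hasFDerivAt.comp_hasDerivAt v hF

theorem HasDerivAt.im {F : ℝ → ℂ} {F' : ℂ} {v : ℝ} (hF : HasDerivAt F F' v) :
    HasDerivAt (fun s => (F s).im) F'.im v :=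
  imCLM.hasFDerivAt.comp_hasDerivAt v hF

theorem Complex.im_sq_le_of_norm_le {z : ℂ} {r : ℝ} (h : ‖z‖ ≤ r) :
    z.im ^ 2 ≤ 2 * r * (r - z.re) := by
  have hnorm : z.re ^ 2 + z.im ^ 2 = ‖z‖ ^ 2 := by rw [Complex.sq_norm, normSq_apply]; ring
  have hre : z.re ≤ r := (re_le_norm z).trans h
  nlinarith [abs_re_le_norm z, norm_nonneg z, neg_abs_le z.re]

section ExpGrowth

variable {c : ℝ} {F F' : ℝ → ℂ}

theorem hasDerivAt_exp_mul_re (hF : ∀ v, HasDerivAt F (F' v) v) (v : ℝ) :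
    HasDerivAt (fun s => rexp (-c * s) * (F s).re)
      (-(rexp (-c * v) * (c * (F v).re - (F' v).re))) v := by
  have hE : HasDerivAt (fun s => rexp (-c * s)) (rexp (-c * v) * -c) v := by
    simpa using ((hasDerivAt_id v).const_mul (-c)).exp
  exact (hE.mul (hF v).re).congr_deriv (by ring)

theorem antitone_exp_mul_re_of_norm_deriv_le (hF : ∀ v, HasDerivAt F (F' v) v)
    (hF' : ∀ v, ‖F' v‖ ≤ c * (F v).re) : Antitone fun v => rexp (-c * v) * (F v).re :=
  antitone_of_hasDerivAt_nonpos (hasDerivAt_exp_mul_re hF) fun v =>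
    neg_nonpos.2 (mul_nonneg (Real.exp_pos _).le (by linarith [re_le_norm (F' v), hF' v]))

theorem abs_im_deriv_le_of_norm_deriv_le (hc : 0 ≤ c) (hF : ∀ v, HasDerivAt F (F' v) v)
    (hF' : ∀ v, ‖F' v‖ ≤ c * (F v).re) {s t : ℝ} (hs : 0 ≤ s) (ht : 0 < t) :
    |(F' s).im| ≤ t / 2 * rexp (c * s) + c * (F 0).re / t * (c * (F s).re - (F' s).re) := by
  set Y := rexp (c * s)
  set K := c * (F 0).re
  set g := c * (F s).re - (F' s).re
  have hY : 0 < Y := Real.exp_pos _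
  have hK : 0 ≤ K := (norm_nonneg _).trans (hF' 0)
  have hg : 0 ≤ g := by linarith [re_le_norm (F' s), hF' s]
  have hgrowth : c * (F s).re ≤ Y * K := by
    have h := antitone_exp_mul_re_of_norm_deriv_le hF hF' hs
    have hYe : Y * rexp (-c * s) = 1 := by rw [← Real.exp_add]; simp
    simp only [mul_zero, Real.exp_zero, one_mul] at h
    calc c * (F s).re = c * Y * (rexp (-c * s) * (F s).re) := by
          rw [← mul_assoc, mul_assoc c, hYe, mul_one]
      _ ≤ c * Y * (F 0).re := mul_le_mul_of_nonneg_left h (by positivity)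
      _ = Y * K := by ring
  have hsq : (F' s).im ^ 2 ≤ Y * (2 * K * g) := by
    nlinarith [im_sq_le_of_norm_le (hF' s), mul_le_mul_of_nonneg_left hgrowth hg]
  have hamgm : (2 * t * |(F' s).im|) ^ 2 ≤ (t ^ 2 * Y + 2 * K * g) ^ 2 := by
    nlinarith [sq_nonneg (t ^ 2 * Y - 2 * K * g), sq_abs (F' s).im]
  have := (sq_le_sq₀ (by positivity) (by positivity)).1 hamgm
  rw [show t / 2 * Y + K / t * g = (t ^ 2 * Y + 2 * K * g) / (2 * t) by field_simp,
    le_div_iff₀ (by positivity)]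
  linarith

theorem abs_im_sub_le_of_norm_deriv_le (hc : 0 < c) (hF : ∀ v, HasDerivAt F (F' v) v)
    (hF' : ∀ v, ‖F' v‖ ≤ c * (F v).re) {V v t : ℝ} (hV : 0 ≤ V) (hVv : V ≤ v)
    (ht : 0 < t) :
    |(F v).im - (F V).im| ≤ rexp (c * v) * (t / (2 * c) + c * (F 0).re / t *
      (rexp (-c * V) * (F V).re - rexp (-c * v) * (F v).re)) := by
  set φ := fun s => rexp (-c * s) * (F s).re
  set M := c * (F 0).re / t
  have hM : 0 ≤ M := div_nonneg ((norm_nonneg _).trans (hF' 0)) ht.le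
  -- an antiderivative of the bound on `|Im F'|`, with `e^{cs} ≤ e^{cv}` in its second term
  set B := fun s => t / (2 * c) * (rexp (c * s) - rexp (c * V)) + M * rexp (c * v) * (φ V - φ s)
  have hB : ∀ s, HasDerivAt B (t / (2 * c) * (rexp (c * s) * c) +
      M * rexp (c * v) * (rexp (-c * s) * (c * (F s).re - (F' s).re))) s := by
    intro s
    have hE : HasDerivAt (fun s => rexp (c * s)) (rexp (c * s) * c) s := by
      simpa using ((hasDerivAt_id s).const_mul c).exp
    exact ((hE.sub_const _).const_mul _).add
      (((hasDerivAt_exp_mul_re hF s).const_sub _).const_mul _) |>.congr_deriv (by ring)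
  have hbound := image_norm_le_of_norm_deriv_right_le_deriv_boundary
    (f := fun s => (F s).im - (F V).im) (a := V) (b := v)
    (fun s _ => ((hF s).im.sub_const _).continuousAt.continuousWithinAt)
    (fun s _ => ((hF s).im.sub_const _).hasDerivWithinAt) (by simp [B]) hB
    (fun s hs => by
      have hg : 0 ≤ c * (F s).re - (F' s).re := by linarith [re_le_norm (F' s), hF' s]
      have hdecay : 1 ≤ rexp (c * v) * rexp (-c * s) := by
        rw [← Real.exp_add]; exact Real.one_le_exp (by nlinarith [hs.2])
      have := abs_im_deriv_le_of_norm_deriv_le hc.le hF hF' (hV.trans hs.1) ht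
      rw [Real.norm_eq_abs]
      calc |(F' s).im| ≤ t / 2 * rexp (c * s) + M * (c * (F s).re - (F' s).re) := this
        _ ≤ t / 2 * rexp (c * s) + M * (rexp (c * v) * rexp (-c * s)) *
            (c * (F s).re - (F' s).re) := by gcongr; exact le_mul_of_one_le_right hM hdecay
        _ = _ := by field_simp)
    ⟨hVv, le_rfl⟩
  refine hbound.trans ?_
  have := Real.exp_pos (c * V)
  have : t / (2 * c) * (rexp (c * v) - rexp (c * V)) ≤ t / (2 * c) * rexp (c * v) := by
    gcongr; linarith
  simp only [B]
  linarith

theorem exp_mul_re_nonneg_of_norm_deriv_le (hc : 0 < c) (hF' : ∀ v, ‖F' v‖ ≤ c * (F v).re)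
    (v : ℝ) : 0 ≤ rexp (-c * v) * (F v).re :=
  mul_nonneg (Real.exp_pos _).le (nonneg_of_mul_nonneg_right ((norm_nonneg _).trans (hF' v)) hc)

theorem bddBelow_range_exp_mul_re_of_norm_deriv_le (hc : 0 < c)
    (hF' : ∀ v, ‖F' v‖ ≤ c * (F v).re) : BddBelow (range fun v => rexp (-c * v) * (F v).re) :=
  ⟨0, forall_mem_range.2 (exp_mul_re_nonneg_of_norm_deriv_le hc hF')⟩

theorem tendsto_exp_neg_mul_atTop_nhds_zero (hc : 0 < c) :
    Tendsto (fun v => rexp (-c * v)) atTop (𝓝 0) :=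
  Real.tendsto_exp_atBot.comp (tendsto_id.const_mul_atTop_of_neg (neg_neg_of_pos hc))

theorem tendsto_exp_mul_im_of_norm_deriv_le (hc : 0 < c) (hF : ∀ v, HasDerivAt F (F' v) v)
    (hF' : ∀ v, ‖F' v‖ ≤ c * (F v).re) :
    Tendsto (fun v => rexp (-c * v) * (F v).im) atTop (𝓝 0) := by
  set φ := fun s => rexp (-c * s) * (F s).re
  have hanti : Antitone φ := antitone_exp_mul_re_of_norm_deriv_le hF hF'
  have hbdd : BddBelow (range φ) := bddBelow_range_exp_mul_re_of_norm_deriv_le hc hF'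
  have hφ := tendsto_atTop_ciInf hanti hbdd
  rw [Metric.tendsto_nhds]
  intro ε hε
  set t := c * ε
  have ht : 0 < t := mul_pos hc hε
  set M := c * (F 0).re / t
  have hgap : Tendsto (fun V => M * (φ V - ⨅ v, φ v)) atTop (𝓝 0) := by
    simpa using (hφ.sub_const (⨅ v, φ v)).const_mul M
  obtain ⟨V, hVgap, hV⟩ := ((hgap.eventually (gt_mem_nhds (by positivity : 0 < ε / 4))).and
    (eventually_ge_atTop 0)).exists
  have hdecay : Tendsto (fun v => rexp (-c * v) * |(F V).im|) atTop (𝓝 0) := by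
    simpa using (tendsto_exp_neg_mul_atTop_nhds_zero hc).mul_const |(F V).im|
  filter_upwards [eventually_ge_atTop V,
    hdecay.eventually (gt_mem_nhds (by positivity : 0 < ε / 4))] with v hVv hsmall
  have hsub := abs_im_sub_le_of_norm_deriv_le hc hF hF' hV hVv ht
  have hinf : ⨅ v, φ v ≤ φ v := ciInf_le hbdd v
  have hev : rexp (-c * v) * rexp (c * v) = 1 := by rw [← Real.exp_add]; simp
  have hM : 0 ≤ M := div_nonneg ((norm_nonneg _).trans (hF' 0)) ht.le
  have hE : 0 < rexp (-c * v) := Real.exp_pos _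
  rw [Real.dist_eq, sub_zero, abs_mul, abs_of_pos hE]
  calc rexp (-c * v) * |(F v).im|
      ≤ rexp (-c * v) * |(F V).im| + rexp (-c * v) * |(F v).im - (F V).im| := by
        rw [← mul_add]; gcongr; linarith [abs_sub_abs_le_abs_sub (F v).im (F V).im]
    _ ≤ rexp (-c * v) * |(F V).im| + (t / (2 * c) + M * (φ V - φ v)) := by
        gcongr
        calc rexp (-c * v) * |(F v).im - (F V).im|
            ≤ rexp (-c * v) * (rexp (c * v) * (t / (2 * c) + M * (φ V - φ v))) := by gcongr
          _ = t / (2 * c) + M * (φ V - φ v) := by rw [← mul_assoc, hev, one_mul]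
    _ < ε := by
        have : M * (φ V - φ v) ≤ M * (φ V - ⨅ v, φ v) := by gcongr
        have : t / (2 * c) = ε / 2 := by simp only [t]; field_simp
        linarith

theorem exists_tendsto_exp_mul_of_norm_deriv_le (hc : 0 < c) (hF : ∀ v, HasDerivAt F (F' v) v)
    (hF' : ∀ v, ‖F' v‖ ≤ c * (F v).re) :
    ∃ A : ℝ, 0 ≤ A ∧ Tendsto (fun v => (rexp (-c * v) : ℂ) * F v) atTop (𝓝 A) := by
  set φ := fun s => rexp (-c * s) * (F s).re
  have hbdd : BddBelow (range φ) := bddBelow_range_exp_mul_re_of_norm_deriv_le hc hF'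
  have hφ := tendsto_atTop_ciInf (antitone_exp_mul_re_of_norm_deriv_le hF hF') hbdd
  have hψ := tendsto_exp_mul_im_of_norm_deriv_le hc hF hF'
  have hlim := ((continuous_ofReal.tendsto _).comp hφ).add
    (((continuous_ofReal.tendsto 0).comp hψ).mul_const I)
  rw [ofReal_zero, zero_mul, add_zero] at hlim
  refine ⟨⨅ v, φ v, le_ciInf (exp_mul_re_nonneg_of_norm_deriv_le hc hF'),
    hlim.congr fun v => ?_⟩
  apply Complex.ext <;> simp [-ofReal_exp]

end ExpGrowth

theorem hasDerivAt_deriv_centerLine {f : ℂ → ℂ} (hf : DifferentiableOn ℂ f 𝕊) (v : ℝ) :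
    HasDerivAt f (deriv f (1 / 2 + v * I)) (1 / 2 + v * I) :=
  (hf.differentiableAt ((isOpen_Ioo.preimage continuous_re).mem_nhds (by norm_num))).hasDerivAt

theorem norm_deriv_le_pi_mul_re_of_re_pos {f : ℂ → ℂ} (hf : DifferentiableOn ℂ f 𝕊)
    (hre : ∀ w ∈ 𝕊, 0 < (f w).re) (v : ℝ) :
    ‖deriv f (1 / 2 + v * I)‖ ≤ π * (f (1 / 2 + v * I)).re := by
  have hchart : DifferentiableOn ℂ (diskToStrip v) (ball 0 1) := fun ζ hζ =>
    (hasDerivAt_diskToStrip (mem_ball_zero_iff.1 hζ)).differentiableAt.differentiableWithinAt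
  have hmaps := mapsTo_diskToStrip v
  have hcomp := (diskToStrip_zero v ▸ hasDerivAt_deriv_centerLine hf v).comp 0
    (hasDerivAt_diskToStrip (v := v) (by simp))
  have := norm_deriv_le_two_mul_re_div_of_re_pos one_pos (hf.comp hchart hmaps)
    fun ζ hζ => hre _ (hmaps hζ)
  rw [hcomp.deriv, Function.comp_apply, diskToStrip_zero] at this
  simp only [one_div, sub_zero, add_zero, mul_one, div_one, mul_neg, norm_neg, Complex.norm_mul,
    Complex.norm_div, norm_ofNat, norm_I, norm_real, Real.norm_eq_abs] at this
  rw [abs_of_pos Real.pi_pos, mul_div_assoc', div_le_iff₀ Real.pi_pos] at this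
  rw [one_div]
  linarith

theorem norm_deriv_le_pi_mul_re {f : ℂ → ℂ} (hf : DifferentiableOn ℂ f 𝕊)
    (hre : ∀ w ∈ 𝕊, 0 ≤ (f w).re) (v : ℝ) :
    ‖deriv f (1 / 2 + v * I)‖ ≤ π * (f (1 / 2 + v * I)).re := by
  refine le_of_forall_pos_le_add fun ε hε => ?_
  have := norm_deriv_le_pi_mul_re_of_re_pos (f := fun w => f w + (ε / π : ℝ)) (hf.add_const _)
    (fun w hw => by simp only [add_re, ofReal_re]; linarith [hre w hw, div_pos hε Real.pi_pos]) v
  rw [deriv_add_const, add_re, ofReal_re, mul_add, mul_div_cancel₀ _ Real.pi_ne_zero] at this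
  exact this

theorem exists_tendsto_exp_mul_centerLine {p : ℂ → ℂ} (hp : DifferentiableOn ℂ p 𝕊)
    (hRe : ∀ w ∈ 𝕊, 0 ≤ (p w).re) :
    ∃ A : ℝ, 0 ≤ A ∧
      Tendsto (fun v : ℝ => (Real.exp (-π * v) : ℂ) * p (1 / 2 + v * I)) atTop (𝓝 A) := by
  refine exists_tendsto_exp_mul_of_norm_deriv_le Real.pi_pos
    (F' := fun v => deriv p (1 / 2 + v * I) * I) (fun v => ?_)
    fun v => by simpa using norm_deriv_le_pi_mul_re hp hRe v
  have hline : HasDerivAt (fun z : ℂ => 1 / 2 + z * I) I v := by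
    simpa using ((hasDerivAt_id (v : ℂ)).mul_const I).const_add (1 / 2 : ℂ)
  exact ((hasDerivAt_deriv_centerLine hp v).comp (v : ℂ) hline).comp_ofReal

theorem strip_angular_limits
    (p : ℂ → ℂ)
    (hp : DifferentiableOn ℂ p {w : ℂ | 0 < w.re ∧ w.re < 1})
    (hRe : ∀ w ∈ {w : ℂ | 0 < w.re ∧ w.re < 1}, 0 ≤ (p w).re) :
    ∃ A B : ℝ, 0 ≤ A ∧ 0 ≤ B ∧
      Tendsto (fun v : ℝ =>
          (Real.exp (-Real.pi * v) : ℂ) * p ((1/2 : ℂ) + (v : ℂ) * Complex.I))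
        atTop (nhds (A : ℂ)) ∧
      Tendsto (fun v : ℝ =>
          (Real.exp (Real.pi * v) : ℂ) * p ((1/2 : ℂ) + (v : ℂ) * Complex.I))
        atBot (nhds (B : ℂ)) := by
  obtain ⟨A, hA0, hA⟩ := exists_tendsto_exp_mul_centerLine hp hRe
  have hmaps : MapsTo (fun w : ℂ => 1 - w) 𝕊 𝕊 :=
    fun w hw => ⟨by simp [hw.2], by simp [hw.1]⟩
  obtain ⟨B, hB0, hB⟩ := exists_tendsto_exp_mul_centerLine (p := fun w => p (1 - w))
    (hp.comp ((differentiable_const 1).sub differentiable_id).differentiableOn hmaps)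
    fun w hw => hRe _ (hmaps hw)
  refine ⟨A, B, hA0, hB0, hA, (hB.comp tendsto_neg_atBot_atTop).congr fun v => ?_⟩
  rw [Function.comp_apply, neg_mul_neg]
  congr 2
  push_cast
  ring
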